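/- arXiv:2303.03143 — 8 statements merged into one kernel-verified Lean document; each statement's English description precedes it below -/
import Mathlib

section
/- A finite graph G is efficiently dominatable if and only if F(G) = |V(G)|, where F(G) is the maximum influence of a 2-packing of G. -/
open SimpleGraph

/-- The closed neighborhood `N[v]` of a vertex. -/
def closedNbhd {V : Type*} (G : SimpleGraph V) (v : V) : Set V :=
  insert v (G.neighborSet v)

/-- `S` is an efficient dominating set: `|N[v] ∩ S| = 1` for every vertex `v`. -/
def isEDS {V : Type*} (G : SimpleGraph V) (S : Set V) : Prop :=
  ∀ v : V, ∃! u : V, u ∈ S ∧ u ∈ closedNbhd G v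

/-- `S` is a 2-packing: closed neighborhoods of distinct members are disjoint. -/
def twoPacking {V : Type*} (G : SimpleGraph V) (S : Set V) : Prop :=
  S.Pairwise fun u v => Disjoint (closedNbhd G u) (closedNbhd G v)

/-- The influence of `S`: the number of vertices dominated by `S`. -/
noncomputable def influence {V : Type*} (G : SimpleGraph V) (S : Set V) : ℕ :=
  (⋃ v ∈ S, closedNbhd G v).ncard

/-- The efficient domination number `F(G)`: maximum influence of a 2-packing. -/
noncomputable def effDomNum {V : Type*} (G : SimpleGraph V) : ℕ :=
  sSup {n | ∃ S : Set V, twoPacking G S ∧ influence G S = n}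


lemma mem_closedNbhd_comm {V : Type*} (G : SimpleGraph V) {u v : V} :
    u ∈ closedNbhd G v ↔ v ∈ closedNbhd G u := by
  simp only [closedNbhd, Set.mem_insert_iff, SimpleGraph.mem_neighborSet]
  constructor
  · rintro (rfl | h); · exact Or.inl rfl
    · exact Or.inr h.symm
  · rintro (rfl | h); · exact Or.inl rfl
    · exact Or.inr h.symm

theorem stmt2 {V : Type*} [Fintype V] (G : SimpleGraph V) :
    (∃ S : Set V, isEDS G S) ↔ effDomNum G = Fintype.card V := by
  have hbound : ∀ S : Set V, influence G S ≤ Fintype.card V := by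
    intro S
    have := Set.ncard_le_ncard (Set.subset_univ (⋃ v ∈ S, closedNbhd G v)) Set.finite_univ
    simpa [influence, Set.ncard_univ, Nat.card_eq_fintype_card] using this
  have hbdd : BddAbove {n | ∃ S : Set V, twoPacking G S ∧ influence G S = n} := by
    refine ⟨Fintype.card V, ?_⟩
    rintro n ⟨S, _, rfl⟩
    exact hbound S
  constructor
  · rintro ⟨S, hS⟩
    have hpack : twoPacking G S := by
      intro u hu v hv huv
      rw [Set.disjoint_left]
      intro w hwu hwv
      obtain ⟨x, hx, hxu⟩ := hS w
      exact huv ((hxu u ⟨hu, (mem_closedNbhd_comm G).mpr hwu⟩).trans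
        (hxu v ⟨hv, (mem_closedNbhd_comm G).mpr hwv⟩).symm)
    have huniv : (⋃ v ∈ S, closedNbhd G v) = Set.univ := by
      ext w
      simp only [Set.mem_univ, iff_true, Set.mem_iUnion]
      obtain ⟨x, ⟨hxS, hxN⟩, _⟩ := hS w
      exact ⟨x, hxS, (mem_closedNbhd_comm G).mp hxN⟩
    have hinf : influence G S = Fintype.card V := by
      rw [influence, huniv, Set.ncard_univ, Nat.card_eq_fintype_card]
    apply le_antisymm
    · unfold effDomNum
      refine csSup_le ?_ ?_
      · exact ⟨influence G S, ⟨S, hpack, rfl⟩⟩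
      · rintro n ⟨T, _, rfl⟩
        exact hbound T
    · exact le_csSup hbdd ⟨S, hpack, hinf⟩
  · intro h
    have hne : {n | ∃ S : Set V, twoPacking G S ∧ influence G S = n}.Nonempty :=
      ⟨influence G ∅, ∅, by simp [twoPacking], rfl⟩
    have hmem := Nat.sSup_mem hne hbdd
    rw [show sSup {n | ∃ S : Set V, twoPacking G S ∧ influence G S = n} = effDomNum G from rfl,
      h] at hmem
    obtain ⟨S, hpack, hinf⟩ := hmem
    have huniv : (⋃ v ∈ S, closedNbhd G v) = Set.univ := by
      apply Set.eq_of_subset_of_ncard_le (Set.subset_univ _) _ Set.finite_univ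
      rw [Set.ncard_univ, Nat.card_eq_fintype_card]
      exact hinf.ge
    refine ⟨S, fun v => ?_⟩
    have hv : v ∈ ⋃ u ∈ S, closedNbhd G u := huniv ▸ Set.mem_univ v
    simp only [Set.mem_iUnion] at hv
    obtain ⟨u, huS, hvu⟩ := hv
    refine ⟨u, ⟨huS, (mem_closedNbhd_comm G).mpr hvu⟩, ?_⟩
    rintro u' ⟨hu'S, hu'N⟩
    by_contra hne'
    exact Set.disjoint_left.mp (hpack hu'S huS hne')
      ((mem_closedNbhd_comm G).mp hu'N) hvu
end

section
/- For every n ≥ 1, the grid graph P_n □ P_2 is efficiently dominatable if and only if n is odd. -/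
open SimpleGraph

lemma mem_closedNbhd_iff {n : ℕ} (v u : Fin n × Fin 2) :
    u ∈ closedNbhd (pathGraph n □ pathGraph 2) v ↔
      (u.1.val = v.1.val ∨ ((u.1.val + 1 = v.1.val ∨ v.1.val + 1 = u.1.val) ∧ u.2.val = v.2.val)) := by
  unfold closedNbhd
  simp only [Set.mem_insert_iff, mem_neighborSet, boxProd_adj, pathGraph_adj,
    Prod.ext_iff, Fin.ext_iff]
  have h2u := u.2.isLt; have h2v := v.2.isLt
  omega

-- forward direction
lemma fwd (n : ℕ) (hn : Odd n) :
    ∃ S : Set (Fin n × Fin 2), isEDS (pathGraph n □ pathGraph 2) S := by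
  refine ⟨{p | p.1.val % 2 = 0 ∧ p.2.val = p.1.val / 2 % 2}, fun v => ?_⟩
  obtain ⟨m, hm⟩ := hn
  have hi := v.1.isLt; have hr := v.2.isLt
  by_cases hpar : v.1.val % 2 = 0
  · refine ⟨(v.1, ⟨v.1.val / 2 % 2, by omega⟩), ⟨⟨hpar, rfl⟩, ?_⟩, ?_⟩
    · rw [mem_closedNbhd_iff]; left; rfl
    · rintro y ⟨⟨hy1, hy2⟩, hyd⟩
      rw [mem_closedNbhd_iff] at hyd
      have h2y := y.2.isLt
      refine Prod.ext (Fin.ext ?_) (Fin.ext ?_) <;> simp only [Fin.val_mk] <;> omega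
  · by_cases hc : (v.1.val - 1) / 2 % 2 = v.2.val
    · refine ⟨(⟨v.1.val - 1, by omega⟩, v.2), ⟨⟨by simp only [Fin.val_mk]; omega, by simp only [Fin.val_mk]; omega⟩, ?_⟩, ?_⟩
      · rw [mem_closedNbhd_iff]; right; exact ⟨by simp; omega, rfl⟩
      · rintro y ⟨⟨hy1, hy2⟩, hyd⟩
        rw [mem_closedNbhd_iff] at hyd
        have h2y := y.2.isLt
        refine Prod.ext (Fin.ext ?_) (Fin.ext ?_) <;> simp only [Fin.val_mk] <;> omega
    · refine ⟨(⟨v.1.val + 1, by omega⟩, v.2), ⟨⟨by simp only [Fin.val_mk]; omega, by simp only [Fin.val_mk]; omega⟩, ?_⟩, ?_⟩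
      · rw [mem_closedNbhd_iff]; right; exact ⟨by simp, rfl⟩
      · rintro y ⟨⟨hy1, hy2⟩, hyd⟩
        rw [mem_closedNbhd_iff] at hyd
        have h2y := y.2.isLt
        refine Prod.ext (Fin.ext ?_) (Fin.ext ?_) <;> simp only [Fin.val_mk] <;> omega

-- backward direction
lemma bwd (n : ℕ) (hn : 1 ≤ n)
    (h : ∃ S : Set (Fin n × Fin 2), isEDS (pathGraph n □ pathGraph 2) S) : Odd n := by
  obtain ⟨S, hS⟩ := h
  rw [Nat.odd_iff]
  by_contra hodd
  have hev : n % 2 = 0 := by omega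
  have hn2 : 2 ≤ n := by omega
  set Q : ℕ → ℕ → Prop := fun i r => ∃ (hi : i < n) (hr : r < 2), (⟨i, hi⟩, ⟨r, hr⟩) ∈ S with hQ
  have hex : ∀ i r, i < n → r < 2 →
      ∃ j s, j < n ∧ s < 2 ∧ Q j s ∧ (j = i ∨ ((j + 1 = i ∨ i + 1 = j) ∧ s = r)) := by
    intro i r hi hr
    obtain ⟨u, ⟨huS, hud⟩, -⟩ := hS (⟨i, hi⟩, ⟨r, hr⟩)
    rw [mem_closedNbhd_iff] at hud
    exact ⟨u.1.val, u.2.val, u.1.isLt, u.2.isLt, ⟨u.1.isLt, u.2.isLt, huS⟩, by simpa using hud⟩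
  have hun : ∀ i r, i < n → r < 2 → ∀ j s j' s',
      Q j s → Q j' s' →
      (j = i ∨ ((j + 1 = i ∨ i + 1 = j) ∧ s = r)) →
      (j' = i ∨ ((j' + 1 = i ∨ i + 1 = j') ∧ s' = r)) →
      j = j' ∧ s = s' := by
    intro i r hi hr j s j' s' ⟨hj, hs, hQ1⟩ ⟨hj', hs', hQ2⟩ hd1 hd2
    obtain ⟨u, -, huniq⟩ := hS (⟨i, hi⟩, ⟨r, hr⟩)
    have e1 := huniq (⟨j, hj⟩, ⟨s, hs⟩) ⟨hQ1, by rw [mem_closedNbhd_iff]; simpa using hd1⟩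
    have e2 := huniq (⟨j', hj'⟩, ⟨s', hs'⟩) ⟨hQ2, by rw [mem_closedNbhd_iff]; simpa using hd2⟩
    have := e1.trans e2.symm
    rw [Prod.ext_iff, Fin.ext_iff, Fin.ext_iff] at this
    exact this
  -- step lemma
  have step : ∀ i s, i + 1 < n → s < 2 → Q i s → i + 2 < n ∧ Q (i + 2) (1 - s) := by
    intro i s hi1 hs hQi
    have hi : i < n := by omega
    -- no other member near: excluded candidates
    have N1 : ¬ Q (i + 1) s := fun hq =>
      absurd (hun i s hi hs (i+1) s i s hq hQi (by omega) (by omega)).1 (by omega)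
    have N2 : ¬ Q i (1 - s) := fun hq =>
      absurd (hun i s hi hs i (1-s) i s hq hQi (by omega) (by omega)).2 (by omega)
    have N3 : ¬ Q (i + 1) (1 - s) := fun hq =>
      absurd (hun (i+1) s hi1 hs (i+1) (1-s) i s hq hQi (by omega) (by omega)).1 (by omega)
    obtain ⟨j, s', hj, hs', hQj, hd⟩ := hex (i + 1) (1 - s) hi1 (by omega)
    -- candidates: (i+1, s'), (i, 1-s), (i+2, 1-s)
    rcases hd with hd | ⟨hd, hds⟩
    · subst hd
      exfalso
      have hss : s' = s ∨ s' = 1 - s := by omega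
      rcases hss with h | h <;> subst h
      · exact N1 hQj
      · exact N3 hQj
    · subst hds
      rcases hd with hd | hd
      · have : j = i := by omega
        subst this; exact absurd hQj N2
      · subst hd; exact ⟨hj, hQj⟩
  -- base: some s with Q 0 s
  have base : ∃ s, s < 2 ∧ Q 0 s := by
    obtain ⟨j, s, hj, hs, hQj, hd⟩ := hex 0 0 (by omega) (by omega)
    rcases hd with hd | ⟨hd, hds⟩
    · exact ⟨s, hs, hd ▸ hQj⟩
    · -- j = 1, s = 0
      have hj1 : j = 1 := by omega
      subst hj1; subst hds
      exfalso
      obtain ⟨j2, s2, hj2, hs2, hQ2, hd2⟩ := hex 0 1 (by omega) (by omega)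
      rcases hd2 with hd2 | ⟨hd2, hds2⟩
      · -- (0, s2) and (1,0) both dominate (0,0)
        subst hd2
        have := hun 0 0 (by omega) (by omega) 0 s2 1 0 hQ2 hQj (by omega) (by omega)
        omega
      · have hj21 : j2 = 1 := by omega
        subst hj21; subst hds2
        -- (1,1) dominates (1,0) which is in S: unique dominator of (1,0) is itself
        have := hun 1 0 (by omega) (by omega) 1 1 1 0 hQ2 hQj (by omega) (by omega)
        omega
  -- induction
  have main : ∀ k, 2 * k + 1 < n → ∃ s, s < 2 ∧ Q (2 * k) s := by
    intro k
    induction k with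
    | zero => intro _; exact base
    | succ m ih =>
      intro hk
      obtain ⟨s, hs, hQs⟩ := ih (by omega)
      obtain ⟨h2, hQ2⟩ := step (2 * m) s (by omega) hs hQs
      refine ⟨1 - s, by omega, ?_⟩
      have h : 2 * (m + 1) = 2 * m + 2 := by omega
      rw [h]
      exact hQ2
  obtain ⟨s, hs, hQs⟩ := main ((n - 2) / 2) (by omega)
  have h2 := step (2 * ((n - 2) / 2)) s (by omega) hs hQs
  omega

theorem stmt4 (n : ℕ) (hn : 1 ≤ n) :
    (∃ S : Set (Fin n × Fin 2), isEDS (pathGraph n □ pathGraph 2) S) ↔ Odd n :=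
  ⟨bwd n hn, fwd n⟩
end

section
/- For every even n ≥ 2, the efficient domination number of P_n □ P_2 equals 2n − 1, i.e., the maximum number of vertices dominated by a 2-packing of P_n □ P_2 is 2n − 1. -/
/-!
Weight the vertex `(a, b)` of the ladder `P_n □ P_2` by `w a = (a + 1) (-1)^a`. This sequence
satisfies `2 w m + w (m - 1) + w (m + 1) = 0` with `w (-1) = 0`, so every closed neighbourhood has
weight `0`, except those in the last column, whose weight is `-w n = ∓(n + 1)`. If a 2-packing
dominated every vertex, the closed neighbourhoods of its members would partition the vertex set,
so `n + 1` would divide the total weight `2 ∑_{a < n} w a`, which is `-n` for even `n`. Hence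
every 2-packing misses a vertex, while the code `{(2k, k mod 2)}` misses only one.
-/

open SimpleGraph

open Finset
open scoped Classical

section PerfectCover

variable {V : Type*} [Fintype V] {G : SimpleGraph V}

lemma filter_mem_closedNbhd (u : V) :
    ({v | v ∈ closedNbhd G u} : Finset V) = insert u (G.neighborFinset u) := by
  ext v
  simp [closedNbhd]

lemma sum_closedNbhd {M : Type*} [AddCommMonoid M] (f : V → M) (u : V) :
    ∑ v with v ∈ closedNbhd G u, f v = f u + ∑ v ∈ G.neighborFinset u, f v := by
  rw [filter_mem_closedNbhd, sum_insert (G.notMem_neighborFinset_self u)]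

lemma sum_eq_sum_sum_closedNbhd {M : Type*} [AddCommMonoid M] {S : Set V}
    (hS : twoPacking G S) (hcover : ⋃ u ∈ S, closedNbhd G u = Set.univ) (f : V → M) :
    ∑ v, f v = ∑ u ∈ S.toFinset, ∑ v with v ∈ closedNbhd G u, f v := by
  have hdisj : (S.toFinset : Set V).PairwiseDisjoint
      fun u => ({v | v ∈ closedNbhd G u} : Finset V) := by
    intro u hu u' hu' hne
    simpa [Function.onFun, disjoint_filter, Set.disjoint_left] using
      hS (by simpa using hu) (by simpa using hu') hne
  rw [← sum_biUnion hdisj]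
  congr
  ext v
  simpa using hcover.superset (Set.mem_univ v)

end PerfectCover

lemma sum_neighborFinset_pathGraph {M : Type*} [AddCommMonoid M] {n : ℕ} (f : ℕ → M)
    (m : Fin n) :
    ∑ a ∈ (pathGraph n).neighborFinset m, f a =
      (if 0 < m.val then f (m - 1) else 0) + (if m.val + 1 < n then f (m + 1) else 0) := by
  have hsplit : (pathGraph n).neighborFinset m =
      ({a | a.val + 1 = m.val} : Finset (Fin n)) ∪
        ({a | m.val + 1 = a.val} : Finset (Fin n)) := by
    ext a
    simp [pathGraph_adj, or_comm]
  rw [hsplit, sum_union (disjoint_filter.mpr fun a _ h h' => by omega), sum_filter, sum_filter,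
    Fin.sum_univ_eq_sum_range (fun a => if a + 1 = m.val then f a else 0),
    Fin.sum_univ_eq_sum_range (fun a => if m.val + 1 = a then f a else 0), sum_ite_eq]
  congr 1
  · split_ifs with hm
    · rw [sum_eq_single (m.val - 1) (fun a _ ha => if_neg (by omega))
        (fun h => absurd (mem_range.mpr (by omega)) h), if_pos (by omega)]
    · exact sum_eq_zero fun a _ => if_neg (by omega)
  · simp

abbrev ladder (n : ℕ) : SimpleGraph (Fin n × Fin 2) := pathGraph n □ pathGraph 2

lemma sum_closedNbhd_ladder {M : Type*} [AddCommMonoid M] {n : ℕ} (f : ℕ → M)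
    (u : Fin n × Fin 2) :
    ∑ v with v ∈ closedNbhd (ladder n) u, f v.1 =
      2 • f u.1 + (if 0 < u.1.val then f (u.1 - 1) else 0) +
        (if u.1.val + 1 < n then f (u.1 + 1) else 0) := by
  have hrung (b : Fin 2) : (pathGraph 2).neighborFinset b = {1 - b} := by
    ext c
    fin_cases b <;> fin_cases c <;> simp [pathGraph_adj]
  rw [sum_closedNbhd, neighborFinset_boxProd, sum_disjUnion, sum_product, sum_product]
  simp only [sum_singleton, hrung]
  rw [sum_neighborFinset_pathGraph]
  abel

def alternatingWeight (a : ℕ) : ℤ := (a + 1) * (-1) ^ a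

lemma two_mul_alternatingWeight_add_add_eq_zero (m : ℕ) :
    2 * alternatingWeight m + (if 0 < m then alternatingWeight (m - 1) else 0) +
      alternatingWeight (m + 1) = 0 := by
  cases m with
  | zero => simp [alternatingWeight]
  | succ k =>
    rw [if_pos k.succ_pos, Nat.add_sub_cancel]
    simp only [alternatingWeight]
    push_cast
    ring

lemma sum_range_alternatingWeight (k : ℕ) :
    ∑ a ∈ range (2 * k), alternatingWeight a = -k := by
  induction k with
  | zero => simp
  | succ k ih =>
    rw [mul_add, mul_one, sum_range_succ, sum_range_succ, ih]
    simp only [alternatingWeight, pow_succ, pow_mul]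
    push_cast
    ring

lemma dvd_sum_closedNbhd_ladder_alternatingWeight {n : ℕ} (u : Fin n × Fin 2) :
    (n + 1 : ℤ) ∣ ∑ v with v ∈ closedNbhd (ladder n) u, alternatingWeight v.1 := by
  have hrec := two_mul_alternatingWeight_add_add_eq_zero u.1
  rw [sum_closedNbhd_ladder, two_nsmul, ← two_mul]
  by_cases hlast : u.1.val + 1 < n
  · rw [if_pos hlast, hrec]
    exact dvd_zero _
  · have hn : u.1.val + 1 = n := by omega
    rw [if_neg hlast, add_zero, eq_neg_of_add_eq_zero_left hrec, hn, dvd_neg]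
    exact dvd_mul_right _ _

lemma iUnion_closedNbhd_ladder_ne_univ {n : ℕ} (hn : 0 < n) (he : Even n)
    {S : Set (Fin n × Fin 2)} (hS : twoPacking (ladder n) S) :
    ⋃ u ∈ S, closedNbhd (ladder n) u ≠ Set.univ := by
  intro hcover
  have htotal : ∑ v : Fin n × Fin 2, alternatingWeight v.1 = -n := by
    obtain ⟨k, hk⟩ := he
    rw [← two_mul] at hk
    subst hk
    rw [Fintype.sum_prod_type]
    simp only [sum_const, card_univ, Fintype.card_fin]
    rw [← smul_sum, Fin.sum_univ_eq_sum_range (fun a => alternatingWeight a),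
      sum_range_alternatingWeight]
    push_cast
    ring
  have hdvd : (n + 1 : ℤ) ∣ n := by
    rw [← dvd_neg, ← htotal, sum_eq_sum_sum_closedNbhd hS hcover]
    exact dvd_sum fun u _ => dvd_sum_closedNbhd_ladder_alternatingWeight u
  have := Int.le_of_dvd (by omega) hdvd
  omega

lemma mem_closedNbhd_ladder {n : ℕ} {u v : Fin n × Fin 2} :
    v ∈ closedNbhd (ladder n) u ↔ v.1.val = u.1.val ∨
      (v.2.val = u.2.val ∧ (v.1.val + 1 = u.1.val ∨ u.1.val + 1 = v.1.val)) := by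
  simp only [closedNbhd, Set.mem_insert_iff, mem_neighborSet, boxProd_adj, pathGraph_adj,
    Prod.ext_iff, Fin.ext_iff]
  omega

def zigzagCode (n : ℕ) : Set (Fin n × Fin 2) :=
  {v | v.1.val % 2 = 0 ∧ v.2.val = v.1.val / 2 % 2}

lemma twoPacking_zigzagCode (n : ℕ) : twoPacking (ladder n) (zigzagCode n) := by
  intro u hu v hv hne
  rw [Set.disjoint_left]
  intro x hxu hxv
  simp only [zigzagCode, Set.mem_ofPred_eq] at hu hv
  rw [mem_closedNbhd_ladder] at hxu hxv
  simp only [ne_eq, Prod.ext_iff, Fin.ext_iff] at hne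
  omega

lemma mem_iUnion_closedNbhd_zigzagCode {n : ℕ} (x : Fin n × Fin 2)
    (hx : x.1.val + 1 < n ∨ x.2.val = x.1.val / 2 % 2) :
    x ∈ ⋃ u ∈ zigzagCode n, closedNbhd (ladder n) u := by
  simp only [Set.mem_iUnion, exists_prop, zigzagCode, Set.mem_ofPred_eq, mem_closedNbhd_ladder]
  obtain ⟨⟨a, ha⟩, ⟨b, hb⟩⟩ := x
  dsimp only at hx ⊢
  by_cases heven : a % 2 = 0
  · exact ⟨(⟨a, ha⟩, ⟨a / 2 % 2, by omega⟩), by dsimp only; omega, Or.inl rfl⟩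
  · by_cases hrow : b = a / 2 % 2
    · exact ⟨(⟨a - 1, by omega⟩, ⟨a / 2 % 2, by omega⟩), by dsimp only; omega,
        by dsimp only; omega⟩
    · exact ⟨(⟨a + 1, by omega⟩, ⟨(a + 1) / 2 % 2, by omega⟩), by dsimp only; omega,
        by dsimp only; omega⟩

lemma subsingleton_compl_iUnion_closedNbhd_zigzagCode (n : ℕ) :
    (⋃ u ∈ zigzagCode n, closedNbhd (ladder n) u)ᶜ.Subsingleton := by
  intro x hx y hy
  have hx' := mt (mem_iUnion_closedNbhd_zigzagCode x) hx
  have hy' := mt (mem_iUnion_closedNbhd_zigzagCode y) hy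
  simp only [Prod.ext_iff, Fin.ext_iff]
  omega

lemma influence_le_of_twoPacking_ladder {n : ℕ} (hn : 0 < n) (he : Even n)
    {S : Set (Fin n × Fin 2)} (hS : twoPacking (ladder n) S) :
    influence (ladder n) S ≤ 2 * n - 1 := by
  have := Set.ncard_lt_card (iUnion_closedNbhd_ladder_ne_univ hn he hS)
  simp only [Nat.card_eq_fintype_card, Fintype.card_prod, Fintype.card_fin] at this
  unfold influence
  omega

lemma le_influence_zigzagCode (n : ℕ) : 2 * n - 1 ≤ influence (ladder n) (zigzagCode n) := by
  have hcompl := (Set.ncard_le_one).mpr (subsingleton_compl_iUnion_closedNbhd_zigzagCode n)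
  have htotal := Set.ncard_add_ncard_compl (⋃ u ∈ zigzagCode n, closedNbhd (ladder n) u)
  simp only [Nat.card_eq_fintype_card, Fintype.card_prod, Fintype.card_fin] at htotal
  unfold influence
  omega

theorem stmt5 (n : ℕ) (h2 : 2 ≤ n) (he : Even n) :
    effDomNum (pathGraph n □ pathGraph 2) = 2 * n - 1 := by
  have hn : 0 < n := by omega
  refine IsGreatest.csSup_eq ⟨⟨zigzagCode n, twoPacking_zigzagCode n, ?_⟩, ?_⟩
  · exact (influence_le_of_twoPacking_ladder hn he (twoPacking_zigzagCode n)).antisymm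
      (le_influence_zigzagCode n)
  · rintro _ ⟨S, hS, rfl⟩
    exact influence_le_of_twoPacking_ladder hn he hS
end

section
/- The grid graph P_5 □ P_5 is not efficiently dominatable and its efficient domination number equals 23. -/
open SimpleGraph

/-! ### Auxiliary decidable machinery for the 5×5 grid -/

open Finset

abbrev V5 := Fin 5 × Fin 5
abbrev G5 : SimpleGraph V5 := pathGraph 5 □ pathGraph 5

def adj' (u v : V5) : Prop :=
  (u.2 = v.2 ∧ (u.1.val + 1 = v.1.val ∨ v.1.val + 1 = u.1.val)) ∨
  (u.1 = v.1 ∧ (u.2.val + 1 = v.2.val ∨ v.2.val + 1 = u.2.val))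

instance (u v : V5) : Decidable (adj' u v) := by unfold adj'; infer_instance

lemma adj_iff (u v : V5) : G5.Adj u v ↔ adj' u v := by
  rw [boxProd_adj]
  simp only [pathGraph_adj, adj']
  tauto

/-- Closed neighborhood as a Finset. -/
def cnF (v : V5) : Finset V5 := Finset.univ.filter (fun u => u = v ∨ adj' v u)

lemma closedNbhd_eq (v : V5) : closedNbhd G5 v = ↑(cnF v) := by
  ext u
  simp only [closedNbhd, Set.mem_insert_iff, mem_neighborSet, adj_iff, cnF,
    Finset.mem_coe, Finset.mem_filter, Finset.mem_univ, true_and]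

def wt (v : V5) : ℕ := (cnF v).card

def far (u v : V5) : Prop := Disjoint (cnF u) (cnF v)

instance (u v : V5) : Decidable (far u v) := by unfold far; infer_instance

lemma far_iff (u v : V5) :
    Disjoint (closedNbhd G5 u) (closedNbhd G5 v) ↔ far u v := by
  rw [closedNbhd_eq, closedNbhd_eq, far, Finset.disjoint_coe]

/-- Bridge: influence of (the coercion of) a 2-packing finset. -/
lemma influence_coe (T : Finset V5) (h : ∀ u ∈ T, ∀ v ∈ T, u ≠ v → far u v) :
    influence G5 ↑T = ∑ v ∈ T, wt v := by
  have hU : (⋃ v ∈ (↑T : Set V5), closedNbhd G5 v) = ↑(T.biUnion cnF) := by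
    ext x
    simp [closedNbhd_eq]
  rw [influence, hU, Set.ncard_coe_finset]
  exact Finset.card_biUnion (fun u hu v hv huv => h u hu v hv huv)

/-- Row weight. -/
def rwt (i : Fin 5) (r : Finset (Fin 5)) : ℕ := ∑ j ∈ r, wt (i, j)

/-- Internal row condition. -/
def rok (i : Fin 5) (r : Finset (Fin 5)) : Prop :=
  ∀ j ∈ r, ∀ j' ∈ r, j ≠ j' → far (i, j) (i, j')

/-- Cross-row condition. -/
def cok (i i' : Fin 5) (r r' : Finset (Fin 5)) : Prop :=
  ∀ j ∈ r, ∀ j' ∈ r', far (i, j) (i', j')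

instance (i : Fin 5) (r : Finset (Fin 5)) : Decidable (rok i r) := by
  unfold rok; infer_instance
instance (i i' : Fin 5) (r r' : Finset (Fin 5)) : Decidable (cok i i' r r') := by
  unfold cok; infer_instance

set_option maxHeartbeats 4000000 in
/-- The exhaustive row-by-row search. -/
lemma key_search : ∀ r0 : Finset (Fin 5), rok 0 r0 →
    ∀ r1 : Finset (Fin 5), rok 1 r1 → cok 0 1 r0 r1 →
    ∀ r2 : Finset (Fin 5), rok 2 r2 → cok 1 2 r1 r2 → cok 0 2 r0 r2 →
    ∀ r3 : Finset (Fin 5), rok 3 r3 → cok 2 3 r2 r3 → cok 1 3 r1 r3 →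
    ∀ r4 : Finset (Fin 5), rok 4 r4 → cok 3 4 r3 r4 → cok 2 4 r2 r4 →
    rwt 0 r0 + rwt 1 r1 + rwt 2 r2 + rwt 3 r3 + rwt 4 r4 ≤ 23 := by
  decide

lemma key (T : Finset V5) (h : ∀ u ∈ T, ∀ v ∈ T, u ≠ v → far u v) :
    ∑ v ∈ T, wt v ≤ 23 := by
  set r : Fin 5 → Finset (Fin 5) := fun i => Finset.univ.filter (fun j => (i, j) ∈ T) with hr
  have hmem : ∀ i j, j ∈ r i ↔ (i, j) ∈ T := by intro i j; simp [hr]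
  have hrok : ∀ i, rok i (r i) := by
    intro i j hj j' hj' hne
    exact h _ ((hmem i j).1 hj) _ ((hmem i j').1 hj') (by simp [hne])
  have hcok : ∀ i i', i ≠ i' → cok i i' (r i) (r i') := by
    intro i i' hii j hj j' hj'
    exact h _ ((hmem i j).1 hj) _ ((hmem i' j').1 hj') (by simp [hii])
  have hsum : ∑ v ∈ T, wt v = ∑ i : Fin 5, rwt i (r i) := by
    have h1 : ∑ v ∈ T, wt v = ∑ v : V5, if v ∈ T then wt v else 0 := by
      rw [Finset.sum_ite_mem, Finset.univ_inter]
    rw [h1, Fintype.sum_prod_type]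
    refine Finset.sum_congr rfl fun i _ => ?_
    rw [rwt, hr, Finset.sum_filter]
  rw [hsum, Fin.sum_univ_five]
  exact key_search (r 0) (hrok 0) (r 1) (hrok 1) (hcok 0 1 (by decide))
    (r 2) (hrok 2) (hcok 1 2 (by decide)) (hcok 0 2 (by decide))
    (r 3) (hrok 3) (hcok 2 3 (by decide)) (hcok 1 3 (by decide))
    (r 4) (hrok 4) (hcok 3 4 (by decide)) (hcok 2 4 (by decide))

lemma UB (S : Set V5) (hS : twoPacking G5 S) : influence G5 S ≤ 23 := by
  have hfin : S.Finite := S.toFinite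
  have hST : ↑hfin.toFinset = S := hfin.coe_toFinset
  have hT : ∀ u ∈ hfin.toFinset, ∀ v ∈ hfin.toFinset, u ≠ v → far u v := by
    intro u hu v hv huv
    exact (far_iff u v).1 (hS (hfin.mem_toFinset.1 hu) (hfin.mem_toFinset.1 hv) huv)
  rw [← hST, influence_coe _ hT]
  exact key _ hT

def W : Finset V5 := {(0,0),(0,3),(2,1),(2,4),(4,0),(4,3)}

lemma hW : ∀ u ∈ W, ∀ v ∈ W, u ≠ v → far u v := by decide

lemma packW : twoPacking G5 ↑W := by
  intro u hu v hv huv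
  exact (far_iff u v).2 (hW u (Finset.mem_coe.1 hu) v (Finset.mem_coe.1 hv) huv)

lemma inflW : influence G5 ↑W = 23 := by
  rw [influence_coe W hW]; decide

lemma cn_comm {V : Type*} (G : SimpleGraph V) (x y : V) :
    x ∈ closedNbhd G y ↔ y ∈ closedNbhd G x := by
  simp [closedNbhd, eq_comm, G.adj_comm]

theorem stmt9 :
    (¬ ∃ S : Set (Fin 5 × Fin 5), isEDS (pathGraph 5 □ pathGraph 5) S) ∧
    effDomNum (pathGraph 5 □ pathGraph 5) = 23 := by
  have hub : ∀ n ∈ {n | ∃ S : Set V5, twoPacking G5 S ∧ influence G5 S = n}, n ≤ 23 := by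
    rintro n ⟨S, hp, rfl⟩; exact UB S hp
  have hmem : 23 ∈ {n | ∃ S : Set V5, twoPacking G5 S ∧ influence G5 S = n} :=
    ⟨↑W, packW, inflW⟩
  constructor
  · rintro ⟨S, hS⟩
    have hpack : twoPacking G5 S := by
      intro u hu v hv huv
      by_contra hnd
      obtain ⟨x, hxu, hxv⟩ := Set.not_disjoint_iff.1 hnd
      obtain ⟨z, _, huniq⟩ := hS x
      exact huv ((huniq u ⟨hu, (cn_comm G5 u x).2 hxu⟩).trans
        (huniq v ⟨hv, (cn_comm G5 v x).2 hxv⟩).symm)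
    have hcov : (⋃ v ∈ S, closedNbhd G5 v) = Set.univ := by
      ext x
      simp only [Set.mem_iUnion, Set.mem_univ, iff_true, exists_prop]
      obtain ⟨u, ⟨huS, hux⟩, _⟩ := hS x
      exact ⟨u, huS, (cn_comm G5 u x).1 hux⟩
    have h25 : influence G5 S = 25 := by
      rw [influence, hcov, Set.ncard_univ]
      simp
    have := UB S hpack
    omega
  · exact le_antisymm (csSup_le ⟨23, hmem⟩ hub) (le_csSup ⟨23, hub⟩ hmem)
end

section
/- For all n ≥ 7 and m ≥ 7, the grid graph P_n □ P_m is not efficiently dominatable. -/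
/-!
Identify the vertices of `P_n □ P_m` with lattice points of `ℤ²`. An efficient dominating set `S`
then gives a function `s : ℤ² → ℕ` (the indicator of `S`, zero off the grid) whose cross sums
`s(i,j) + s(i±1,j) + s(i,j±1)` equal `1` at every grid point. Already near one corner these
equations have no solution: the corner is dominated by exactly one of `(0,0)`, `(1,0)`, `(0,1)`,
and in each case (splitting once more on `(1,2)` when the corner itself is chosen) the equations
at the points of `[0,4) × [0,6)` are inconsistent.
-/

open SimpleGraph

def crossSum (s : ℤ → ℤ → ℕ) (i j : ℤ) : ℕ :=
  s i j + s (i - 1) j + s (i + 1) j + s i (j - 1) + s i (j + 1)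

theorem exists_crossSum_ne_one_of_corner (s : ℤ → ℤ → ℕ) (hrow : ∀ j, s (-1) j = 0)
    (hcol : ∀ i, s i (-1) = 0) :
    ∃ i j : ℕ, i < 4 ∧ j < 6 ∧ crossSum s i j ≠ 1 := by
  by_contra! h
  have e : ∀ i : Fin 4, ∀ j : Fin 6, crossSum s i j = 1 := fun i j => h i j i.2 j.2
  simp only [Fin.forall_fin_succ] at e
  norm_num [crossSum, hrow, hcol] at e
  obtain ⟨⟨e00, e01, e02, e03, e04, e05⟩, ⟨e10, e11, e12, e13, e14, e15⟩,
    ⟨e20, e21, e22, e23, e24, e25⟩, e30, e31, e32, e33, e34, e35⟩ := e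
  -- The system has rational solutions, so some splitting on `0/1` values is unavoidable;
  -- each branch below is infeasible already over `ℚ`.
  obtain h00 | h00 := Nat.le_one_iff_eq_zero_or_eq_one.1 (show s 0 0 ≤ 1 by linarith)
  · obtain h10 | h10 := Nat.le_one_iff_eq_zero_or_eq_one.1 (show s 1 0 ≤ 1 by linarith)
    · linarith
    · linarith
  · obtain h12 | h12 := Nat.le_one_iff_eq_zero_or_eq_one.1 (show s 1 2 ≤ 1 by linarith)
    · linarith
    · linarith

section Grid

variable {n m : ℕ}

theorem mem_closedNbhd_boxProd_pathGraph {v w : Fin n × Fin m} :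
    w ∈ closedNbhd (pathGraph n □ pathGraph m) v ↔
      ((w.1 : ℤ) - v.1).natAbs + ((w.2 : ℤ) - v.2).natAbs ≤ 1 := by
  simp only [closedNbhd, Set.mem_insert_iff, mem_neighborSet, boxProd_adj, pathGraph_adj,
    Prod.ext_iff, Fin.ext_iff]
  omega

open Classical in
noncomputable def latticeIndicator (S : Set (Fin n × Fin m)) (i j : ℤ) : ℕ :=
  if ∃ v ∈ S, (v.1 : ℤ) = i ∧ (v.2 : ℤ) = j then 1 else 0

theorem latticeIndicator_neg_one_left (S : Set (Fin n × Fin m)) (j : ℤ) :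
    latticeIndicator S (-1) j = 0 := by
  simp only [latticeIndicator, ite_eq_right_iff]
  rintro ⟨v, -, hv, -⟩
  omega

theorem latticeIndicator_neg_one_right (S : Set (Fin n × Fin m)) (i : ℤ) :
    latticeIndicator S i (-1) = 0 := by
  simp only [latticeIndicator, ite_eq_right_iff]
  rintro ⟨v, -, -, hv⟩
  omega

theorem crossSum_latticeIndicator_of_isEDS {S : Set (Fin n × Fin m)}
    (hS : isEDS (pathGraph n □ pathGraph m) S) (v : Fin n × Fin m) :
    crossSum (latticeIndicator S) v.1 v.2 = 1 := by
  obtain ⟨u, ⟨huS, huv⟩, hu⟩ := hS v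
  have near : ∀ i j : ℤ, (i - v.1).natAbs + (j - v.2).natAbs ≤ 1 →
      latticeIndicator S i j = if (u.1 : ℤ) = i ∧ (u.2 : ℤ) = j then 1 else 0 := by
    intro i j hij
    have : (∃ w ∈ S, (w.1 : ℤ) = i ∧ (w.2 : ℤ) = j) ↔ (u.1 : ℤ) = i ∧ (u.2 : ℤ) = j := by
      refine ⟨?_, fun h => ⟨u, huS, h⟩⟩
      rintro ⟨w, hwS, rfl, rfl⟩
      rw [hu w ⟨hwS, mem_closedNbhd_boxProd_pathGraph.2 hij⟩]
      exact ⟨rfl, rfl⟩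
    simp only [latticeIndicator, this]
  rw [mem_closedNbhd_boxProd_pathGraph] at huv
  unfold crossSum
  rw [near _ _ (by omega), near _ _ (by omega), near _ _ (by omega), near _ _ (by omega),
    near _ _ (by omega)]
  split_ifs <;> omega

end Grid

theorem stmt11 (n m : ℕ) (hn : 7 ≤ n) (hm : 7 ≤ m) :
    ¬ ∃ S : Set (Fin n × Fin m), isEDS (pathGraph n □ pathGraph m) S := by
  rintro ⟨S, hS⟩
  obtain ⟨i, j, hi, hj, hne⟩ := exists_crossSum_ne_one_of_corner (latticeIndicator S)
    (latticeIndicator_neg_one_left S) (latticeIndicator_neg_one_right S)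
  exact hne (crossSum_latticeIndicator_of_isEDS hS (⟨i, by omega⟩, ⟨j, by omega⟩))
end

section
/- For 4 ≤ m ≤ 6 and n > m, the grid graph P_n □ P_m is not efficiently dominatable. -/
open SimpleGraph

/-! ### Auxiliary development -/

set_option maxHeartbeats 4000000
set_option maxRecDepth 100000

/-- Column transition condition: each row `v` of the middle column `Y` is dominated
exactly once by the columns `X`, `Y`, `Z`. -/
abbrev edT {m : ℕ} (X Y Z : Finset (Fin m)) : Prop :=
  ∀ v : Fin m,
    (if v ∈ X then 1 else 0) + (if v ∈ Z then 1 else 0) + (if v ∈ Y then 1 else 0)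
    + (if ∃ u ∈ Y, (u : ℕ) + 1 = (v : ℕ) then 1 else 0)
    + (if ∃ u ∈ Y, (v : ℕ) + 1 = (u : ℕ) then 1 else 0) = 1

section Lists

-- m = 4
def T41 : List (Finset (Fin 4) × Finset (Fin 4)) :=
  [(∅, {0,1,2,3}), ({0}, {2,3}), ({1}, {3}), ({2}, {0}), ({3}, {0,1}), ({0,3}, ∅)]
def T42 : List (Finset (Fin 4) × Finset (Fin 4)) := [(∅, {1,2}), ({0}, {3}), ({3}, {0})]
def T43 : List (Finset (Fin 4) × Finset (Fin 4)) := [({0}, {2}), ({3}, {1})]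
def T44 : List (Finset (Fin 4) × Finset (Fin 4)) := [({1}, ∅), ({2}, ∅)]
def T45 : List (Finset (Fin 4) × Finset (Fin 4)) := [(∅, {0,1,3}), (∅, {0,2,3})]

lemma L41 : ∀ a b : Finset (Fin 4), edT ∅ a b → (a, b) ∈ T41 := by decide
lemma L42 : ∀ a b : Finset (Fin 4), (a, b) ∈ T41 → ∀ c, edT a b c → (b, c) ∈ T42 := by decide
lemma L43 : ∀ a b : Finset (Fin 4), (a, b) ∈ T42 → ∀ c, edT a b c → (b, c) ∈ T43 := by decide
lemma L44 : ∀ a b : Finset (Fin 4), (a, b) ∈ T43 → ∀ c, edT a b c → (b, c) ∈ T44 := by decide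
lemma L45 : ∀ a b : Finset (Fin 4), (a, b) ∈ T44 → ∀ c, edT a b c → (b, c) ∈ T45 := by decide
lemma L46 : ∀ a b : Finset (Fin 4), (a, b) ∈ T45 → ∀ c, ¬ edT a b c := by decide
lemma A44 : ∀ a b : Finset (Fin 4), (a, b) ∈ T44 → ¬ edT a b ∅ := by decide

-- m = 5
def T51 : List (Finset (Fin 5) × Finset (Fin 5)) :=
  [(∅, {0,1,2,3,4}), ({0}, {2,3,4}), ({1}, {3,4}), ({2}, {0,4}), ({3}, {0,1}),
   ({0,3}, ∅), ({4}, {0,1,2}), ({0,4}, {2}), ({1,4}, ∅)]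
def T52 : List (Finset (Fin 5) × Finset (Fin 5)) :=
  [(∅, {0,2,3}), (∅, {1,2,4}), ({2}, ∅), ({0,4}, ∅)]
def T53 : List (Finset (Fin 5) × Finset (Fin 5)) := [(∅, {1,2,3}), (∅, {0,1,3,4})]

lemma L51 : ∀ a b : Finset (Fin 5), edT ∅ a b → (a, b) ∈ T51 := by decide
lemma L52 : ∀ a b : Finset (Fin 5), (a, b) ∈ T51 → ∀ c, edT a b c → (b, c) ∈ T52 := by decide
lemma L53 : ∀ a b : Finset (Fin 5), (a, b) ∈ T52 → ∀ c, edT a b c → (b, c) ∈ T53 := by decide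
lemma L54 : ∀ a b : Finset (Fin 5), (a, b) ∈ T53 → ∀ c, ¬ edT a b c := by decide

-- m = 6
def T61 : List (Finset (Fin 6) × Finset (Fin 6)) :=
  [(∅, {0,1,2,3,4,5}), ({0}, {2,3,4,5}), ({1}, {3,4,5}), ({2}, {0,4,5}), ({3}, {0,1,5}),
   ({0,3}, {5}), ({4}, {0,1,2}), ({0,4}, {2}), ({1,4}, ∅), ({5}, {0,1,2,3}),
   ({0,5}, {2,3}), ({1,5}, {3}), ({2,5}, {0})]
def T62 : List (Finset (Fin 6) × Finset (Fin 6)) :=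
  [(∅, {0,2,3,5}), ({0}, {3,4}), ({2}, {5}), ({3}, {0}), ({5}, {1,2})]
def T63 : List (Finset (Fin 6) × Finset (Fin 6)) := [({0}, {2,4,5}), ({5}, {0,1,3})]

lemma L61 : ∀ a b : Finset (Fin 6), edT ∅ a b → (a, b) ∈ T61 := by decide
lemma L62 : ∀ a b : Finset (Fin 6), (a, b) ∈ T61 → ∀ c, edT a b c → (b, c) ∈ T62 := by decide
lemma L63 : ∀ a b : Finset (Fin 6), (a, b) ∈ T62 → ∀ c, edT a b c → (b, c) ∈ T63 := by decide
lemma L64 : ∀ a b : Finset (Fin 6), (a, b) ∈ T63 → ∀ c, ¬ edT a b c := by decide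

end Lists

/-! ### Master lemmas: no long sequences of valid columns -/

lemma master4 (n : ℕ) (hn : 4 < n) (B : ℕ → Finset (Fin 4))
    (H0 : edT ∅ (B 0) (B 1))
    (H1 : ∀ i, i + 1 < n → edT (B i) (B (i+1)) (B (i+2)))
    (HE : ∀ i, n ≤ i → B i = ∅) : False := by
  have t1 := L41 _ _ H0
  have t2 := L42 _ _ t1 _ (H1 0 (by omega))
  have t3 := L43 _ _ t2 _ (H1 1 (by omega))
  have t4 := L44 _ _ t3 _ (H1 2 (by omega))
  by_cases h5 : n = 5
  · have c4 := H1 3 (by omega)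
    rw [HE 5 (by omega)] at c4
    exact A44 _ _ t4 c4
  · have t5 := L45 _ _ t4 _ (H1 3 (by omega))
    exact L46 _ _ t5 _ (H1 4 (by omega))

lemma master5 (n : ℕ) (hn : 5 < n) (B : ℕ → Finset (Fin 5))
    (H0 : edT ∅ (B 0) (B 1))
    (H1 : ∀ i, i + 1 < n → edT (B i) (B (i+1)) (B (i+2))) : False := by
  have t1 := L51 _ _ H0
  have t2 := L52 _ _ t1 _ (H1 0 (by omega))
  have t3 := L53 _ _ t2 _ (H1 1 (by omega))
  exact L54 _ _ t3 _ (H1 2 (by omega))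

lemma master6 (n : ℕ) (hn : 6 < n) (B : ℕ → Finset (Fin 6))
    (H0 : edT ∅ (B 0) (B 1))
    (H1 : ∀ i, i + 1 < n → edT (B i) (B (i+1)) (B (i+2))) : False := by
  have t1 := L61 _ _ H0
  have t2 := L62 _ _ t1 _ (H1 0 (by omega))
  have t3 := L63 _ _ t2 _ (H1 1 (by omega))
  exact L64 _ _ t3 _ (H1 2 (by omega))

/-! ### Columns of a set of vertices -/

open Classical in
/-- The `j`-th column of `S`, as a finset of rows (empty if `j ≥ n`). -/
noncomputable def colF {n m : ℕ} (S : Set (Fin n × Fin m)) (j : ℕ) : Finset (Fin m) :=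
  if h : j < n then Finset.univ.filter (fun r => ((⟨j, h⟩ : Fin n), r) ∈ S) else ∅

lemma mem_colF {n m : ℕ} {S : Set (Fin n × Fin m)} {j : ℕ} {r : Fin m} :
    r ∈ colF S j ↔ ∃ h : j < n, ((⟨j, h⟩ : Fin n), r) ∈ S := by
  classical
  unfold colF
  split
  · next h =>
      simp only [Finset.mem_filter, Finset.mem_univ, true_and]
      exact ⟨fun hm => ⟨h, hm⟩, fun ⟨h', hm⟩ => hm⟩
  · next h => simp [h]

lemma exactlyOne (P1 P2 P3 P4 P5 : Prop) [Decidable P1] [Decidable P2] [Decidable P3]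
    [Decidable P4] [Decidable P5]
    (h : P1 ∨ P2 ∨ P3 ∨ P4 ∨ P5)
    (h12 : ¬(P1 ∧ P2)) (h13 : ¬(P1 ∧ P3)) (h14 : ¬(P1 ∧ P4)) (h15 : ¬(P1 ∧ P5))
    (h23 : ¬(P2 ∧ P3)) (h24 : ¬(P2 ∧ P4)) (h25 : ¬(P2 ∧ P5))
    (h34 : ¬(P3 ∧ P4)) (h35 : ¬(P3 ∧ P5)) (h45 : ¬(P4 ∧ P5)) :
    (if P1 then 1 else 0) + (if P2 then 1 else 0) + (if P3 then 1 else 0)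
      + (if P4 then 1 else 0) + (if P5 then 1 else 0) = 1 := by
  by_cases P1 <;> by_cases P2 <;> by_cases P3 <;> by_cases P4 <;> by_cases P5 <;> simp_all

/-! ### Bridge: an EDS yields valid column transitions -/

lemma bridge {n m : ℕ} {S : Set (Fin n × Fin m)}
    (hS : isEDS (pathGraph n □ pathGraph m) S) (j : ℕ) (hj : j < n) :
    edT (if j = 0 then ∅ else colF S (j-1)) (colF S j) (colF S (j+1)) := by
  intro r
  obtain ⟨w, ⟨hwS, hwN⟩, hw⟩ := hS (⟨j, hj⟩, r)
  have hW : ∀ u : Fin n × Fin m, u ∈ S →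
      u ∈ closedNbhd (pathGraph n □ pathGraph m) (⟨j, hj⟩, r) → u = w :=
    fun u h1 h2 => hw u ⟨h1, h2⟩
  have hN : ∀ u : Fin n × Fin m,
      u ∈ closedNbhd (pathGraph n □ pathGraph m) (⟨j, hj⟩, r) ↔
      (u = (⟨j, hj⟩, r) ∨
        (((j + 1 = (u.1 : ℕ) ∨ (u.1 : ℕ) + 1 = j) ∧ r = u.2) ∨
         (((r : ℕ) + 1 = (u.2 : ℕ) ∨ (u.2 : ℕ) + 1 = (r : ℕ)) ∧ (⟨j, hj⟩ : Fin n) = u.1))) := by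
    intro u
    simp only [closedNbhd, Set.mem_insert_iff, SimpleGraph.mem_neighborSet,
      SimpleGraph.boxProd_adj, SimpleGraph.pathGraph_adj]
  -- the five domination possibilities, each pinning down the coordinates of `w`
  have d1 : r ∈ (if j = 0 then (∅ : Finset (Fin m)) else colF S (j-1)) →
      (w.1 : ℕ) + 1 = j ∧ (w.2 : ℕ) = (r : ℕ) := by
    intro hc
    rcases Nat.eq_zero_or_pos j with h0 | h0
    · simp [h0] at hc
    · rw [if_neg (by omega)] at hc
      obtain ⟨h', hmem⟩ := mem_colF.mp hc
      have heq := hW ((⟨j-1, h'⟩ : Fin n), r) hmem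
        ((hN _).mpr (Or.inr (Or.inl ⟨Or.inr (show j - 1 + 1 = j by omega), rfl⟩)))
      rw [← heq]
      exact ⟨show j - 1 + 1 = j by omega, rfl⟩
  have d2 : r ∈ colF S (j+1) → (w.1 : ℕ) = j + 1 ∧ (w.2 : ℕ) = (r : ℕ) := by
    intro hc
    obtain ⟨h', hmem⟩ := mem_colF.mp hc
    have heq := hW ((⟨j+1, h'⟩ : Fin n), r) hmem
      ((hN _).mpr (Or.inr (Or.inl ⟨Or.inl rfl, rfl⟩)))
    rw [← heq]
    exact ⟨rfl, rfl⟩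
  have d3 : r ∈ colF S j → (w.1 : ℕ) = j ∧ (w.2 : ℕ) = (r : ℕ) := by
    intro hc
    obtain ⟨h', hmem⟩ := mem_colF.mp hc
    have heq := hW ((⟨j, h'⟩ : Fin n), r) hmem ((hN _).mpr (Or.inl rfl))
    rw [← heq]
    exact ⟨rfl, rfl⟩
  have d4 : (∃ u ∈ colF S j, (u : ℕ) + 1 = (r : ℕ)) →
      (w.1 : ℕ) = j ∧ (w.2 : ℕ) + 1 = (r : ℕ) := by
    rintro ⟨u, hu, hur⟩
    obtain ⟨h', hmem⟩ := mem_colF.mp hu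
    have heq := hW ((⟨j, h'⟩ : Fin n), u) hmem
      ((hN _).mpr (Or.inr (Or.inr ⟨Or.inr hur, rfl⟩)))
    rw [← heq]
    exact ⟨rfl, hur⟩
  have d5 : (∃ u ∈ colF S j, (r : ℕ) + 1 = (u : ℕ)) →
      (w.1 : ℕ) = j ∧ (r : ℕ) + 1 = (w.2 : ℕ) := by
    rintro ⟨u, hu, hur⟩
    obtain ⟨h', hmem⟩ := mem_colF.mp hu
    have heq := hW ((⟨j, h'⟩ : Fin n), u) hmem
      ((hN _).mpr (Or.inr (Or.inr ⟨Or.inl hur, rfl⟩)))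
    rw [← heq]
    exact ⟨rfl, hur⟩
  -- existence: at least one of the five possibilities holds
  have hEx : r ∈ (if j = 0 then (∅ : Finset (Fin m)) else colF S (j-1)) ∨
      r ∈ colF S (j+1) ∨ r ∈ colF S j ∨
      (∃ u ∈ colF S j, (u : ℕ) + 1 = (r : ℕ)) ∨
      (∃ u ∈ colF S j, (r : ℕ) + 1 = (u : ℕ)) := by
    rcases (hN w).mp hwN with h | ⟨h | h, h2⟩ | ⟨h | h, h2⟩
    · right; right; left
      refine mem_colF.mpr ⟨hj, ?_⟩
      rw [h] at hwS; exact hwS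
    · -- j + 1 = ↑w.1 : right column
      right; left
      have h' : j + 1 < n := by have := w.1.isLt; omega
      refine mem_colF.mpr ⟨h', ?_⟩
      have heq : ((⟨j+1, h'⟩ : Fin n), r) = w := Prod.ext (Fin.ext h) h2
      rw [heq]; exact hwS
    · -- ↑w.1 + 1 = j : left column
      left
      rw [if_neg (by omega)]
      have h' : j - 1 < n := by omega
      refine mem_colF.mpr ⟨h', ?_⟩
      have heq : ((⟨j-1, h'⟩ : Fin n), r) = w :=
        Prod.ext (Fin.ext (show j - 1 = (w.1 : ℕ) by omega)) h2
      rw [heq]; exact hwS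
    · -- ↑r + 1 = ↑w.2 : above
      right; right; right; right
      have heq : ((⟨j, hj⟩ : Fin n), w.2) = w := Prod.ext h2 rfl
      exact ⟨w.2, mem_colF.mpr ⟨hj, by rw [heq]; exact hwS⟩, h⟩
    · -- ↑w.2 + 1 = ↑r : below
      right; right; right; left
      have heq : ((⟨j, hj⟩ : Fin n), w.2) = w := Prod.ext h2 rfl
      exact ⟨w.2, mem_colF.mpr ⟨hj, by rw [heq]; exact hwS⟩, h⟩
  refine exactlyOne _ _ _ _ _ hEx ?_ ?_ ?_ ?_ ?_ ?_ ?_ ?_ ?_ ?_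
  · rintro ⟨a, b⟩; obtain ⟨e1, e2⟩ := d1 a; obtain ⟨e3, e4⟩ := d2 b; omega
  · rintro ⟨a, b⟩; obtain ⟨e1, e2⟩ := d1 a; obtain ⟨e3, e4⟩ := d3 b; omega
  · rintro ⟨a, b⟩; obtain ⟨e1, e2⟩ := d1 a; obtain ⟨e3, e4⟩ := d4 b; omega
  · rintro ⟨a, b⟩; obtain ⟨e1, e2⟩ := d1 a; obtain ⟨e3, e4⟩ := d5 b; omega
  · rintro ⟨a, b⟩; obtain ⟨e1, e2⟩ := d2 a; obtain ⟨e3, e4⟩ := d3 b; omega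
  · rintro ⟨a, b⟩; obtain ⟨e1, e2⟩ := d2 a; obtain ⟨e3, e4⟩ := d4 b; omega
  · rintro ⟨a, b⟩; obtain ⟨e1, e2⟩ := d2 a; obtain ⟨e3, e4⟩ := d5 b; omega
  · rintro ⟨a, b⟩; obtain ⟨e1, e2⟩ := d3 a; obtain ⟨e3, e4⟩ := d4 b; omega
  · rintro ⟨a, b⟩; obtain ⟨e1, e2⟩ := d3 a; obtain ⟨e3, e4⟩ := d5 b; omega
  · rintro ⟨a, b⟩; obtain ⟨e1, e2⟩ := d4 a; obtain ⟨e3, e4⟩ := d5 b; omega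

theorem stmt13 (n m : ℕ) (hm4 : 4 ≤ m) (hm6 : m ≤ 6) (hnm : m < n) :
    ¬ ∃ S : Set (Fin n × Fin m), isEDS (pathGraph n □ pathGraph m) S := by
  rintro ⟨S, hS⟩
  have hB0 : edT ∅ (colF S 0) (colF S 1) := by
    have h := bridge hS 0 (by omega)
    simpa using h
  have hB1 : ∀ i, i + 1 < n → edT (colF S i) (colF S (i+1)) (colF S (i+2)) := by
    intro i hi
    have h := bridge hS (i+1) hi
    simpa using h
  have hBE : ∀ i, n ≤ i → colF S i = ∅ := fun i hi => dif_neg (by omega)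
  have hm : m = 4 ∨ m = 5 ∨ m = 6 := by omega
  rcases hm with rfl | rfl | rfl
  · exact master4 n hnm (colF S) hB0 hB1 hBE
  · exact master5 n hnm (colF S) hB0 hB1
  · exact master6 n hnm (colF S) hB0 hB1
end

section
/- For every n ≥ 7, with k = ⌊n/5⌋: if n ≡ 0, 1, or 4 (mod 5) then F(P_n □ P_n) ≥ n² − 4k, and if n ≡ 2 or 3 (mod 5) then F(P_n □ P_n) ≥ n² − n + k + 1. -/
open SimpleGraph

lemma mem_closedNbhd_grid {n : ℕ} (v w : Fin n × Fin n) :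
    w ∈ closedNbhd (pathGraph n □ pathGraph n) v ↔
      (w.1.val = v.1.val ∧ w.2.val = v.2.val) ∨
      ((w.1.val + 1 = v.1.val ∨ v.1.val + 1 = w.1.val) ∧ w.2.val = v.2.val) ∨
      (w.1.val = v.1.val ∧ (w.2.val + 1 = v.2.val ∨ v.2.val + 1 = w.2.val)) := by
  simp only [closedNbhd, Set.mem_insert_iff, mem_neighborSet, boxProd_adj, pathGraph_adj,
    Prod.ext_iff, Fin.ext_iff]
  tauto

lemma count_range (n a : ℕ) (ha : a < 5) :
    ((Finset.range n).filter (fun y => y % 5 = a)).card = (n + 4 - a) / 5 := by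
  induction n with
  | zero => simp; omega
  | succ m ih =>
    rw [Finset.range_add_one, Finset.filter_insert]
    by_cases h : m % 5 = a
    · rw [if_pos h, Finset.card_insert_of_notMem (by simp)]
      omega
    · rw [if_neg h]; omega

lemma fin_count (n a : ℕ) (ha : a < 5) :
    {y : Fin n | y.val % 5 = a}.ncard = (n + 4 - a) / 5 := by
  rw [← count_range n a ha, Set.ncard_eq_toFinset_card']
  apply Finset.card_bij (fun y _ => y.val)
  · intro y hy
    simp only [Set.mem_toFinset, Set.mem_setOf_eq] at hy
    simp [hy, y.isLt]
  · intro y1 _ y2 _ h; exact Fin.ext h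
  · intro y hy
    simp only [Finset.mem_filter, Finset.mem_range] at hy
    exact ⟨⟨y, hy.1⟩, by simp [hy.2], rfl⟩

lemma ncard_col (n m a : ℕ) (hm : m < n) (ha : a < 5) :
    {v : Fin n × Fin n | v.1.val = m ∧ v.2.val % 5 = a}.ncard = (n + 4 - a) / 5 := by
  have h : {v : Fin n × Fin n | v.1.val = m ∧ v.2.val % 5 = a}
      = (fun y : Fin n => ((⟨m, hm⟩ : Fin n), y)) '' {y : Fin n | y.val % 5 = a} := by
    ext ⟨x, y⟩
    simp only [Set.mem_setOf_eq, Set.mem_image]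
    constructor
    · rintro ⟨h1, h2⟩
      exact ⟨y, h2, Prod.ext (Fin.ext h1.symm) rfl⟩
    · rintro ⟨z, hz, he⟩
      rw [Prod.mk.injEq] at he
      obtain ⟨he1, he2⟩ := he
      subst he1; subst he2
      exact ⟨rfl, hz⟩
  rw [h, Set.ncard_image_of_injective _ (fun a b h => by simpa using h), fin_count n a ha]

lemma ncard_row (n m a : ℕ) (hm : m < n) (ha : a < 5) :
    {v : Fin n × Fin n | v.2.val = m ∧ v.1.val % 5 = a}.ncard = (n + 4 - a) / 5 := by
  have h : {v : Fin n × Fin n | v.2.val = m ∧ v.1.val % 5 = a}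
      = (fun x : Fin n => (x, (⟨m, hm⟩ : Fin n))) '' {x : Fin n | x.val % 5 = a} := by
    ext ⟨x, y⟩
    simp only [Set.mem_setOf_eq, Set.mem_image]
    constructor
    · rintro ⟨h1, h2⟩
      exact ⟨x, h2, Prod.ext rfl (Fin.ext h1.symm)⟩
    · rintro ⟨z, hz, he⟩
      rw [Prod.mk.injEq] at he
      obtain ⟨he1, he2⟩ := he
      subst he1; subst he2
      exact ⟨rfl, hz⟩
  rw [h, Set.ncard_image_of_injective _ (fun a b h => by simpa using h), fin_count n a ha]

lemma grid_bound (n c a1 a2 a3 a4 : ℕ) (hn : 7 ≤ n)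
    (ha1 : a1 < 5) (ha2 : a2 < 5) (ha3 : a3 < 5) (ha4 : a4 < 5)
    (hcov : ∀ x y : ℕ, x < n → y < n →
      ¬(x = 0 ∧ y % 5 = a1) → ¬(x = n - 1 ∧ y % 5 = a2) →
      ¬(y = 0 ∧ x % 5 = a3) → ¬(y = n - 1 ∧ x % 5 = a4) →
      (2*x + y) % 5 = c ∨
      (x + 1 < n ∧ (2*(x+1) + y) % 5 = c) ∨
      (0 < x ∧ (2*(x-1) + y) % 5 = c) ∨
      (y + 1 < n ∧ (2*x + (y+1)) % 5 = c) ∨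
      (0 < y ∧ (2*x + (y-1)) % 5 = c)) :
    n^2 - ((n+4-a1)/5 + (n+4-a2)/5 + (n+4-a3)/5 + (n+4-a4)/5)
      ≤ effDomNum (pathGraph n □ pathGraph n) := by
  set G := pathGraph n □ pathGraph n with hG
  set S : Set (Fin n × Fin n) := {v | (2 * v.1.val + v.2.val) % 5 = c} with hS
  have hpack : twoPacking G S := by
    intro u hu v hv huv
    rw [Set.disjoint_left]
    intro w hwu hwv
    rw [mem_closedNbhd_grid] at hwu hwv
    simp only [hS, Set.mem_setOf_eq] at hu hv
    apply huv
    rw [Prod.ext_iff, Fin.ext_iff, Fin.ext_iff]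
    omega
  set D : Set (Fin n × Fin n) := ⋃ v ∈ S, closedNbhd G v with hD
  have hDc : Dᶜ ⊆ {v : Fin n × Fin n | v.1.val = 0 ∧ v.2.val % 5 = a1}
      ∪ {v : Fin n × Fin n | v.1.val = n-1 ∧ v.2.val % 5 = a2}
      ∪ {v : Fin n × Fin n | v.2.val = 0 ∧ v.1.val % 5 = a3}
      ∪ {v : Fin n × Fin n | v.2.val = n-1 ∧ v.1.val % 5 = a4} := by
    intro v hv
    by_contra hnb
    simp only [Set.mem_union, Set.mem_setOf_eq, not_or] at hnb
    obtain ⟨⟨⟨h1, h2⟩, h3⟩, h4⟩ := hnb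
    apply hv
    rcases hcov v.1.val v.2.val v.1.isLt v.2.isLt h1 h2 h3 h4 with
      h | ⟨hb, h⟩ | ⟨hb, h⟩ | ⟨hb, h⟩ | ⟨hb, h⟩
    · exact Set.mem_biUnion (show v ∈ S from h) (by rw [mem_closedNbhd_grid]; left; exact ⟨rfl, rfl⟩)
    · refine Set.mem_biUnion (show ((⟨v.1.val + 1, hb⟩ : Fin n), v.2) ∈ S from h) ?_
      rw [mem_closedNbhd_grid]; right; left; exact ⟨Or.inl rfl, rfl⟩
    · refine Set.mem_biUnion (show ((⟨v.1.val - 1, by omega⟩ : Fin n), v.2) ∈ S from h) ?_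
      rw [mem_closedNbhd_grid]; right; left
      exact ⟨Or.inr (by simp; omega), rfl⟩
    · refine Set.mem_biUnion (show (v.1, (⟨v.2.val + 1, hb⟩ : Fin n)) ∈ S from h) ?_
      rw [mem_closedNbhd_grid]; right; right; exact ⟨rfl, Or.inl rfl⟩
    · refine Set.mem_biUnion (show (v.1, (⟨v.2.val - 1, by omega⟩ : Fin n)) ∈ S from h) ?_
      rw [mem_closedNbhd_grid]; right; right
      exact ⟨rfl, Or.inr (by simp; omega)⟩
  have hcard : Dᶜ.ncard ≤ (n+4-a1)/5 + (n+4-a2)/5 + (n+4-a3)/5 + (n+4-a4)/5 := by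
    refine le_trans (Set.ncard_le_ncard hDc (Set.toFinite _)) ?_
    have e1 := ncard_col n 0 a1 (by omega) ha1
    have e2 := ncard_col n (n-1) a2 (by omega) ha2
    have e3 := ncard_row n 0 a3 (by omega) ha3
    have e4 := ncard_row n (n-1) a4 (by omega) ha4
    have u1 := Set.ncard_union_le
      ({v : Fin n × Fin n | v.1.val = 0 ∧ v.2.val % 5 = a1}
        ∪ {v : Fin n × Fin n | v.1.val = n-1 ∧ v.2.val % 5 = a2}
        ∪ {v : Fin n × Fin n | v.2.val = 0 ∧ v.1.val % 5 = a3})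
      {v : Fin n × Fin n | v.2.val = n-1 ∧ v.1.val % 5 = a4}
    have u2 := Set.ncard_union_le
      ({v : Fin n × Fin n | v.1.val = 0 ∧ v.2.val % 5 = a1}
        ∪ {v : Fin n × Fin n | v.1.val = n-1 ∧ v.2.val % 5 = a2})
      {v : Fin n × Fin n | v.2.val = 0 ∧ v.1.val % 5 = a3}
    have u3 := Set.ncard_union_le
      {v : Fin n × Fin n | v.1.val = 0 ∧ v.2.val % 5 = a1}
      {v : Fin n × Fin n | v.1.val = n-1 ∧ v.2.val % 5 = a2}
    omega
  have htot : D.ncard + Dᶜ.ncard = n^2 := by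
    rw [Set.ncard_add_ncard_compl, Nat.card_eq_fintype_card, Fintype.card_prod,
      Fintype.card_fin, sq]
  have hbdd : BddAbove {m | ∃ S : Set (Fin n × Fin n), twoPacking G S ∧ influence G S = m} := by
    refine ⟨n^2, ?_⟩
    rintro m ⟨T, -, rfl⟩
    have h := Set.ncard_le_ncard (Set.subset_univ (⋃ v ∈ T, closedNbhd G v)) (Set.toFinite _)
    rw [Set.ncard_univ, Nat.card_eq_fintype_card, Fintype.card_prod, Fintype.card_fin] at h
    calc influence G T ≤ n * n := h
      _ = n ^ 2 := (sq n).symm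
  have hle : influence G S ≤ effDomNum G := le_csSup hbdd ⟨S, hpack, rfl⟩
  have : influence G S = D.ncard := rfl
  omega

theorem stmt15 (n : ℕ) (hn : 7 ≤ n) :
    (n % 5 = 0 ∨ n % 5 = 1 ∨ n % 5 = 4 →
      n ^ 2 - 4 * (n / 5) ≤ effDomNum (pathGraph n □ pathGraph n)) ∧
    (n % 5 = 2 ∨ n % 5 = 3 →
      n ^ 2 - n + n / 5 + 1 ≤ effDomNum (pathGraph n □ pathGraph n)) := by
  have hp : n ≤ n ^ 2 := Nat.le_self_pow two_ne_zero n
  constructor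
  · rintro (hr | hr | hr)
    · have H := grid_bound n 0 2 0 3 0 hn (by norm_num) (by norm_num) (by norm_num) (by norm_num)
        (by
        intro x y hx hy h1 h2 h3 h4
        rcases (by omega : (2*x+y) % 5 = 0 ∨ (2*x+y) % 5 = 1 ∨ (2*x+y) % 5 = 2 ∨
          (2*x+y) % 5 = 3 ∨ (2*x+y) % 5 = 4) with h|h|h|h|h <;>
        first
          | (left; omega)
          | (right; left; omega)
          | (right; right; left; omega)
          | (right; right; right; left; omega)
          | (right; right; right; right; omega))
      omega
    · have H := grid_bound n 0 2 3 3 2 hn (by norm_num) (by norm_num) (by norm_num) (by norm_num)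
        (by
        intro x y hx hy h1 h2 h3 h4
        rcases (by omega : (2*x+y) % 5 = 0 ∨ (2*x+y) % 5 = 1 ∨ (2*x+y) % 5 = 2 ∨
          (2*x+y) % 5 = 3 ∨ (2*x+y) % 5 = 4) with h|h|h|h|h <;>
        first
          | (left; omega)
          | (right; left; omega)
          | (right; right; left; omega)
          | (right; right; right; left; omega)
          | (right; right; right; right; omega))
      omega
    · have H := grid_bound n 2 4 4 4 4 hn (by norm_num) (by norm_num) (by norm_num) (by norm_num)
        (by
        intro x y hx hy h1 h2 h3 h4
        rcases (by omega : (2*x+y) % 5 = 0 ∨ (2*x+y) % 5 = 1 ∨ (2*x+y) % 5 = 2 ∨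
          (2*x+y) % 5 = 3 ∨ (2*x+y) % 5 = 4) with h|h|h|h|h <;>
        first
          | (left; omega)
          | (right; left; omega)
          | (right; right; left; omega)
          | (right; right; right; left; omega)
          | (right; right; right; right; omega))
      omega
  · rintro (hr | hr)
    · have H := grid_bound n 0 2 1 3 4 hn (by norm_num) (by norm_num) (by norm_num) (by norm_num)
        (by
        intro x y hx hy h1 h2 h3 h4
        rcases (by omega : (2*x+y) % 5 = 0 ∨ (2*x+y) % 5 = 1 ∨ (2*x+y) % 5 = 2 ∨
          (2*x+y) % 5 = 3 ∨ (2*x+y) % 5 = 4) with h|h|h|h|h <;>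
        first
          | (left; omega)
          | (right; left; omega)
          | (right; right; left; omega)
          | (right; right; right; left; omega)
          | (right; right; right; right; omega))
      omega
    · have H := grid_bound n 0 2 4 3 1 hn (by norm_num) (by norm_num) (by norm_num) (by norm_num)
        (by
        intro x y hx hy h1 h2 h3 h4
        rcases (by omega : (2*x+y) % 5 = 0 ∨ (2*x+y) % 5 = 1 ∨ (2*x+y) % 5 = 2 ∨
          (2*x+y) % 5 = 3 ∨ (2*x+y) % 5 = 4) with h|h|h|h|h <;>
        first
          | (left; omega)
          | (right; left; omega)
          | (right; right; left; omega)
          | (right; right; right; left; omega)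
          | (right; right; right; right; omega))
      omega
end

section
/- The infinite hexagonal lattice graph (the infinite 3-regular honeycomb grid) has an efficient dominating set, i.e., a set S of vertices such that every vertex has exactly one element of its closed neighborhood in S. -/
open SimpleGraph

/-- The infinite hexagonal (honeycomb) lattice graph. -/
def hexG : SimpleGraph ((ℤ × ℤ) × Bool) :=
  SimpleGraph.fromRel (fun a b =>
    a.2 = false ∧ b.2 = true ∧
      (b.1 = a.1 ∨ b.1 = (a.1.1 - 1, a.1.2) ∨ b.1 = (a.1.1, a.1.2 - 1)))

/-!
Reducing coordinates mod 2 maps the honeycomb lattice onto the 8-vertex honeycomb over `ZMod 2`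
(a cube), and it maps every closed neighbourhood bijectively onto a closed neighbourhood, since the
four vertices of a closed neighbourhood differ by `0`, `(1, 0)`, `(0, 1)` or by colour. Pulling back
an efficient dominating set along such a map gives one, so the preimage of the perfect code
`{white (0, 0), black (1, 1)}` of the cube works: white vertices with both coordinates even
together with black vertices with both coordinates odd.
-/

theorem isEDS_preimage {V W : Type*} {G : SimpleGraph V} {H : SimpleGraph W} {f : V → W}
    (hf : ∀ v, Set.BijOn f (closedNbhd G v) (closedNbhd H (f v))) {T : Set W}
    (hT : isEDS H T) : isEDS G (f ⁻¹' T) := by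
  intro v
  obtain ⟨t, ⟨htT, htv⟩, ht_unique⟩ := hT (f v)
  obtain ⟨u, huv, rfl⟩ := (hf v).surjOn htv
  refine ⟨u, ⟨htT, huv⟩, fun u' ⟨hu'T, hu'v⟩ => (hf v).injOn hu'v huv ?_⟩
  exact ht_unique _ ⟨hu'T, (hf v).mapsTo hu'v⟩

def honeycomb (R : Type*) [AddGroupWithOne R] : SimpleGraph ((R × R) × Bool) :=
  SimpleGraph.fromRel (fun a b =>
    a.2 = false ∧ b.2 = true ∧
      (b.1 = a.1 ∨ b.1 = (a.1.1 - 1, a.1.2) ∨ b.1 = (a.1.1, a.1.2 - 1)))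

theorem hexG_eq_honeycomb : hexG = honeycomb ℤ := rfl

section
variable {R : Type*} [AddGroupWithOne R]

theorem closedNbhd_honeycomb_false (p : R × R) :
    closedNbhd (honeycomb R) (p, false) =
      {(p, false), (p, true), ((p.1 - 1, p.2), true), ((p.1, p.2 - 1), true)} := by
  ext ⟨q, _ | _⟩ <;> simp [closedNbhd, honeycomb, Prod.ext_iff]

theorem closedNbhd_honeycomb_true (p : R × R) :
    closedNbhd (honeycomb R) (p, true) =
      {(p, true), (p, false), ((p.1 + 1, p.2), false), ((p.1, p.2 + 1), false)} := by
  ext ⟨q, _ | _⟩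
  · simp [closedNbhd, honeycomb, Prod.ext_iff, eq_sub_iff_add_eq]
    grind
  · simp [closedNbhd, honeycomb, Prod.ext_iff]
end

def honeycombMap {R S : Type*} [Ring R] [Ring S] (φ : R →+* S) :
    (R × R) × Bool → (S × S) × Bool :=
  Prod.map (Prod.map φ φ) id

section
variable {R S : Type*} [Ring R] [Ring S] (φ : R →+* S)

theorem image_honeycombMap_closedNbhd (v : (R × R) × Bool) :
    honeycombMap φ '' closedNbhd (honeycomb R) v =
      closedNbhd (honeycomb S) (honeycombMap φ v) := by
  obtain ⟨p, _ | _⟩ := v <;>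
    simp [honeycombMap, closedNbhd_honeycomb_false, closedNbhd_honeycomb_true,
      Set.image_insert_eq]

theorem injOn_honeycombMap_closedNbhd [Nontrivial S] (v : (R × R) × Bool) :
    Set.InjOn (honeycombMap φ) (closedNbhd (honeycomb R) v) := by
  obtain ⟨p, _ | _⟩ := v <;>
    simp only [closedNbhd_honeycomb_false, closedNbhd_honeycomb_true, Set.InjOn,
      Set.mem_insert_iff, Set.mem_singleton_iff] <;>
    rintro x (rfl | rfl | rfl | rfl) y (rfl | rfl | rfl | rfl) hxy <;>
    simp_all [honeycombMap, Prod.ext_iff, eq_sub_iff_add_eq]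

theorem bijOn_honeycombMap_closedNbhd [Nontrivial S] (v : (R × R) × Bool) :
    Set.BijOn (honeycombMap φ) (closedNbhd (honeycomb R) v)
      (closedNbhd (honeycomb S) (honeycombMap φ v)) := by
  rw [← image_honeycombMap_closedNbhd]
  exact (injOn_honeycombMap_closedNbhd φ v).bijOn_image

end

-- The decidability instance of the unfolded `∃!` exceeds the default instance size.
set_option synthInstance.maxSize 256 in
theorem isEDS_honeycomb_zmod_two :
    isEDS (honeycomb (ZMod 2)) {((0, 0), false), ((1, 1), true)} := by
  rintro ⟨p, _ | _⟩ <;>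
    simp only [closedNbhd_honeycomb_false, closedNbhd_honeycomb_true, ExistsUnique,
      Set.mem_insert_iff, Set.mem_singleton_iff] <;>
    revert p <;> decide

theorem stmt18 : ∃ S : Set ((ℤ × ℤ) × Bool), isEDS hexG S := by
  rw [hexG_eq_honeycomb]
  exact ⟨_, isEDS_preimage (bijOn_honeycombMap_closedNbhd (Int.castRingHom (ZMod 2)))
    isEDS_honeycomb_zmod_two⟩
end
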